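/- Let U ⊆ ℝⁿ be open and bounded, Y a Banach space, and m, k ∈ ℕ. The map A : C^k(closure U, L^m_s(ℝ^d, Y)) → L^m_s(C^k(closure U, ℝ^d), C^k(closure U, Y)) defined by (A(H)(h₁,…,h_m))(x) := H(x)(h₁(x),…,h_m(x)) is a well-defined continuous linear map between Banach spaces. -/

import Mathlib

noncomputable section

/-- Membership in `C^k(closure U, Y)`: `f` is `k` times continuously
differentiable on `U` and each iterated derivative of order `i ≤ k` extends
continuously to `closure U`. -/
def IsCkBar {E Y : Type*} [NormedAddCommGroup E] [NormedSpace ℝ E]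
    [NormedAddCommGroup Y] [NormedSpace ℝ Y] (k : ℕ) (U : Set E) (f : E → Y) : Prop :=
  ContDiffOn ℝ k f U ∧
  ∀ i ≤ k, ∃ g : C(closure U, ContinuousMultilinearMap ℝ (fun _ : Fin i => E) Y),
    ∀ x : closure U, (x : E) ∈ U → g x = iteratedFDerivWithin ℝ i f U x

/-- The `C^k` norm `‖f‖ = max_{i ≤ k} sup_{x ∈ U} ‖D^i f(x)‖` (which by density
equals the corresponding sup over `closure U` of the continuous extensions). -/
def ckNorm {E Y : Type*} [NormedAddCommGroup E] [NormedSpace ℝ E]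
    [NormedAddCommGroup Y] [NormedSpace ℝ Y] (k : ℕ) (U : Set E) (f : E → Y) : ℝ :=
  ⨆ i : Fin (k + 1), ⨆ x : U, ‖iteratedFDerivWithin ℝ (i : ℕ) f U x‖

/-!
Evaluating one argument at a time, `H x (h₀ x, …, h_{m-1} x)` is the curried map
`(H x).curryLeft (h₀ x)` evaluated at the remaining arguments, and `(A, v) ↦ A.curryLeft v` is a
bilinear map of norm at most one. By induction on `m` everything therefore reduces to
`x ↦ B (f x) (g x)` for a continuous bilinear `B`. There the Leibniz rule
`‖Dⁱ B(f, g)‖ ≤ ‖B‖ ∑ⱼ (i choose j) ‖Dʲ f‖ ‖Dⁱ⁻ʲ g‖` gives the factor `2 ^ k`, and the continuous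
extension of the derivatives to the closure follows by induction on `k` from
`D B(f, g) = B(f, D g) + B(D f, g)`.
-/

open Set

section ExtendsToClosure

variable {X Z W : Type*} [TopologicalSpace X] [TopologicalSpace Z] [TopologicalSpace W]
  {U : Set X} {φ ψ : X → Z}

def ExtendsToClosure (U : Set X) (φ : X → Z) : Prop :=
  ∃ g : C(closure U, Z), ∀ x : closure U, (x : X) ∈ U → g x = φ x

theorem extendsToClosure_congr (h : EqOn φ ψ U) :
    ExtendsToClosure U φ ↔ ExtendsToClosure U ψ :=
  exists_congr fun g => forall₂_congr fun x hx => by rw [h hx]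

theorem ExtendsToClosure.comp {T : Z → W} (hT : Continuous T) (hφ : ExtendsToClosure U φ) :
    ExtendsToClosure U (fun x => T (φ x)) :=
  let ⟨g, hg⟩ := hφ
  ⟨⟨T ∘ g, hT.comp g.continuous⟩, fun x hx => congrArg T (hg x hx)⟩

theorem ExtendsToClosure.prodMk {χ : X → W} (hφ : ExtendsToClosure U φ)
    (hχ : ExtendsToClosure U χ) : ExtendsToClosure U (fun x => (φ x, χ x)) :=
  let ⟨g, hg⟩ := hφ
  let ⟨g', hg'⟩ := hχ
  ⟨g.prodMk g', fun x hx => Prod.ext (hg x hx) (hg' x hx)⟩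

theorem extendsToClosure_homeomorph_comp_iff (e : Z ≃ₜ W) :
    ExtendsToClosure U (fun x => e (φ x)) ↔ ExtendsToClosure U φ :=
  ⟨fun h => by simpa using h.comp e.symm.continuous, fun h => h.comp e.continuous⟩

theorem ExtendsToClosure.bddAbove_norm {Z : Type*} [SeminormedAddCommGroup Z] {φ : X → Z}
    (hU : IsCompact (closure U)) (hφ : ExtendsToClosure U φ) :
    BddAbove (range fun x : U => ‖φ x‖) := by
  obtain ⟨g, hg⟩ := hφ
  have : CompactSpace (closure U) := isCompact_iff_compactSpace.mp hU
  refine (isCompact_range g.continuous.norm).bddAbove.mono ?_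
  rintro - ⟨x, rfl⟩
  exact ⟨⟨x, subset_closure x.2⟩, by simp [hg ⟨x, subset_closure x.2⟩ x.2]⟩

theorem ExtendsToClosure.bilinear {F G Z : Type*} [NormedAddCommGroup F] [NormedSpace ℝ F]
    [NormedAddCommGroup G] [NormedSpace ℝ G] [NormedAddCommGroup Z] [NormedSpace ℝ Z]
    (B : F →L[ℝ] G →L[ℝ] Z) {f : X → F} {g : X → G}
    (hf : ExtendsToClosure U f) (hg : ExtendsToClosure U g) :
    ExtendsToClosure U (fun x => B (f x) (g x)) :=
  (hf.prodMk hg).comp B.isBoundedBilinearMap.continuous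

end ExtendsToClosure

section IsCkBar

variable {E F G Z : Type*} [NormedAddCommGroup E] [NormedSpace ℝ E]
  [NormedAddCommGroup F] [NormedSpace ℝ F] [NormedAddCommGroup G] [NormedSpace ℝ G]
  [NormedAddCommGroup Z] [NormedSpace ℝ Z] {U : Set E} {k : ℕ} {f : E → F}

theorem isCkBar_iff : IsCkBar k U f ↔
    ContDiffOn ℝ k f U ∧ ∀ i ≤ k, ExtendsToClosure U (iteratedFDerivWithin ℝ i f U) :=
  Iff.rfl

theorem extendsToClosure_iteratedFDerivWithin_zero_iff :
    ExtendsToClosure U (iteratedFDerivWithin ℝ 0 f U) ↔ ExtendsToClosure U f := by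
  rw [iteratedFDerivWithin_zero_eq_comp, Function.comp_def]
  exact extendsToClosure_homeomorph_comp_iff (φ := f)
    (continuousMultilinearCurryFin0 ℝ E F).symm.toHomeomorph

theorem extendsToClosure_iteratedFDerivWithin_succ_iff (hU : UniqueDiffOn ℝ U) {i : ℕ} :
    ExtendsToClosure U (iteratedFDerivWithin ℝ (i + 1) f U) ↔
      ExtendsToClosure U (iteratedFDerivWithin ℝ i (fderivWithin ℝ f U) U) := by
  have h : EqOn (iteratedFDerivWithin ℝ (i + 1) f U) (fun x =>
      (continuousMultilinearCurryRightEquiv' ℝ i E F).symm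
        (iteratedFDerivWithin ℝ i (fderivWithin ℝ f U) U x)) U :=
    fun _ hx => iteratedFDerivWithin_succ_eq_comp_right hU hx
  rw [extendsToClosure_congr h]
  exact extendsToClosure_homeomorph_comp_iff
    (continuousMultilinearCurryRightEquiv' ℝ i E F).symm.toHomeomorph

theorem isCkBar_zero_iff : IsCkBar 0 U f ↔ ContinuousOn f U ∧ ExtendsToClosure U f := by
  rw [isCkBar_iff, ← extendsToClosure_iteratedFDerivWithin_zero_iff]
  simp [contDiffOn_zero]

theorem isCkBar_succ_iff (hU : UniqueDiffOn ℝ U) :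
    IsCkBar (k + 1) U f ↔
      ExtendsToClosure U f ∧ DifferentiableOn ℝ f U ∧ IsCkBar k U (fderivWithin ℝ f U) := by
  have hcd : ContDiffOn ℝ (k + 1 : ℕ) f U ↔
      DifferentiableOn ℝ f U ∧ ContDiffOn ℝ k (fderivWithin ℝ f U) U := by
    simpa using contDiffOn_succ_iff_fderivWithin (n := k) hU
  have hext : (∀ i ≤ k + 1, ExtendsToClosure U (iteratedFDerivWithin ℝ i f U)) ↔
      ExtendsToClosure U f ∧
        ∀ i ≤ k, ExtendsToClosure U (iteratedFDerivWithin ℝ i (fderivWithin ℝ f U) U) := by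
    refine ⟨fun h => ⟨extendsToClosure_iteratedFDerivWithin_zero_iff.1 (h 0 k.succ.zero_le),
      fun i hi => (extendsToClosure_iteratedFDerivWithin_succ_iff hU).1 (h (i + 1) (by omega))⟩,
      ?_⟩
    rintro ⟨h₀, h⟩ (_ | i) hi
    exacts [extendsToClosure_iteratedFDerivWithin_zero_iff.2 h₀,
      (extendsToClosure_iteratedFDerivWithin_succ_iff hU).2 (h i (by omega))]
  rw [isCkBar_iff, isCkBar_iff, hcd, hext]
  tauto

theorem IsCkBar.extendsToClosure (hf : IsCkBar k U f) {i : ℕ} (hi : i ≤ k) :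
    ExtendsToClosure U (iteratedFDerivWithin ℝ i f U) :=
  hf.2 i hi

theorem IsCkBar.of_le {j : ℕ} (hf : IsCkBar k U f) (hjk : j ≤ k) : IsCkBar j U f :=
  ⟨hf.1.of_le (by exact_mod_cast hjk), fun i hi => hf.2 i (hi.trans hjk)⟩

theorem IsCkBar.congr {g : E → F} (hf : IsCkBar k U f) (h : EqOn f g U) : IsCkBar k U g :=
  ⟨hf.1.congr fun _ hx => (h hx).symm, fun i hi =>
    (extendsToClosure_congr fun _ hx => iteratedFDerivWithin_congr h hx i).1
      (hf.extendsToClosure hi)⟩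

theorem IsCkBar.add (hU : UniqueDiffOn ℝ U) {g : E → F} (hf : IsCkBar k U f)
    (hg : IsCkBar k U g) : IsCkBar k U (fun x => f x + g x) := by
  refine ⟨hf.1.add hg.1, fun i hi => ?_⟩
  have hik : (i : WithTop ℕ∞) ≤ k := by exact_mod_cast hi
  refine (extendsToClosure_congr fun x hx => ?_).1
    (((hf.extendsToClosure hi).prodMk (hg.extendsToClosure hi)).comp continuous_add)
  exact (fun_iteratedFDerivWithin_add_apply (hf.1.of_le hik x hx) (hg.1.of_le hik x hx) hU
    hx).symm

theorem IsCkBar.clm_apply (hU : UniqueDiffOn ℝ U) (T : F →L[ℝ] Z) (hf : IsCkBar k U f) :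
    IsCkBar k U (fun x => T (f x)) := by
  refine ⟨hf.1.continuousLinearMap_comp T, fun i hi => ?_⟩
  refine (extendsToClosure_congr fun x hx => ?_).1 ((hf.extendsToClosure hi).comp
    (T.compContinuousMultilinearMapL ℝ (fun _ : Fin i => E) F Z).continuous)
  exact (T.iteratedFDerivWithin_comp_left (hf.1 x hx) hU hx (by exact_mod_cast hi)).symm

theorem ckNorm_nonneg : 0 ≤ ckNorm k U f :=
  Real.iSup_nonneg fun _ => Real.iSup_nonneg fun _ => norm_nonneg _

theorem ckNorm_le {C : ℝ} (hC : 0 ≤ C)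
    (h : ∀ i ≤ k, ∀ x ∈ U, ‖iteratedFDerivWithin ℝ i f U x‖ ≤ C) : ckNorm k U f ≤ C :=
  ciSup_le fun i => Real.iSup_le (fun x => h i (Nat.lt_succ_iff.mp i.2) x x.2) hC

theorem norm_iteratedFDerivWithin_le_ckNorm (hU : IsCompact (closure U)) (hf : IsCkBar k U f)
    {i : ℕ} (hi : i ≤ k) {x : E} (hx : x ∈ U) :
    ‖iteratedFDerivWithin ℝ i f U x‖ ≤ ckNorm k U f :=
  calc ‖iteratedFDerivWithin ℝ i f U x‖
      ≤ ⨆ y : U, ‖iteratedFDerivWithin ℝ i f U y‖ :=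
        le_ciSup ((hf.extendsToClosure hi).bddAbove_norm hU) ⟨x, hx⟩
    _ ≤ ckNorm k U f :=
        le_ciSup (f := fun j : Fin (k + 1) => ⨆ y : U, ‖iteratedFDerivWithin ℝ j f U y‖)
          (finite_range _).bddAbove ⟨i, Nat.lt_succ_of_le hi⟩

theorem ckNorm_clm_apply_le (hUd : UniqueDiffOn ℝ U) (hUc : IsCompact (closure U))
    (T : F →L[ℝ] Z) (hf : IsCkBar k U f) :
    ckNorm k U (fun x => T (f x)) ≤ ‖T‖ * ckNorm k U f :=
  ckNorm_le (mul_nonneg (norm_nonneg T) ckNorm_nonneg) fun i hi x hx =>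
    (T.norm_iteratedFDerivWithin_comp_left (hf.1 x hx) hUd hx (by exact_mod_cast hi)).trans
      (by gcongr; exact norm_iteratedFDerivWithin_le_ckNorm hUc hf hi hx)

theorem ckNorm_bilinear_le (hUd : UniqueDiffOn ℝ U) (hUc : IsCompact (closure U))
    (B : F →L[ℝ] G →L[ℝ] Z) {g : E → G} (hf : IsCkBar k U f) (hg : IsCkBar k U g) :
    ckNorm k U (fun x => B (f x) (g x)) ≤ ‖B‖ * 2 ^ k * (ckNorm k U f * ckNorm k U g) := by
  have hf₀ : 0 ≤ ckNorm k U f := ckNorm_nonneg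
  have hg₀ : 0 ≤ ckNorm k U g := ckNorm_nonneg
  refine ckNorm_le (by positivity) fun i hi x hx => ?_
  calc ‖iteratedFDerivWithin ℝ i (fun x => B (f x) (g x)) U x‖
      ≤ ‖B‖ * ∑ j ∈ Finset.range (i + 1), (i.choose j : ℝ) *
          ‖iteratedFDerivWithin ℝ j f U x‖ * ‖iteratedFDerivWithin ℝ (i - j) g U x‖ :=
        B.norm_iteratedFDerivWithin_le_of_bilinear hf.1 hg.1 hUd hx (by exact_mod_cast hi)
    _ ≤ ‖B‖ * ∑ j ∈ Finset.range (i + 1), (i.choose j : ℝ) * ckNorm k U f * ckNorm k U g := by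
        gcongr with j hj
        · exact norm_iteratedFDerivWithin_le_ckNorm hUc hf
            ((Nat.le_of_lt_succ (Finset.mem_range.mp hj)).trans hi) hx
        · exact norm_iteratedFDerivWithin_le_ckNorm hUc hg ((Nat.sub_le i j).trans hi) hx
    _ = ‖B‖ * 2 ^ i * (ckNorm k U f * ckNorm k U g) := by
        rw [← Finset.sum_mul, ← Finset.sum_mul, ← Nat.cast_sum, Nat.sum_range_choose]
        push_cast
        ring
    _ ≤ ‖B‖ * 2 ^ k * (ckNorm k U f * ckNorm k U g) := by
        gcongr
        exact one_le_two

end IsCkBar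

section Evaluation

variable {E : Type} [NormedAddCommGroup E] [NormedSpace ℝ E] {U : Set E} {k : ℕ}
  {F G Z : Type*} [NormedAddCommGroup F] [NormedSpace ℝ F] [NormedAddCommGroup G]
  [NormedSpace ℝ G] [NormedAddCommGroup Z] [NormedSpace ℝ Z]

/- The domain lives in `Type` so that the spaces `E →L[ℝ] G` that replace `G` in the induction
on `k` stay in the universe of `G`. -/
theorem IsCkBar.bilinear (hU : UniqueDiffOn ℝ U) (B : F →L[ℝ] G →L[ℝ] Z) {f : E → F}
    {g : E → G} (hf : IsCkBar k U f) (hg : IsCkBar k U g) :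
    IsCkBar k U (fun x => B (f x) (g x)) := by
  induction k generalizing F G Z with
  | zero =>
    rw [isCkBar_zero_iff] at *
    exact ⟨B.isBoundedBilinearMap.continuous.comp_continuousOn (hf.1.prodMk hg.1),
      hf.2.bilinear B hg.2⟩
  | succ k ih =>
    obtain ⟨hf₀, hf₁, hf'⟩ := (isCkBar_succ_iff hU).1 hf
    obtain ⟨hg₀, hg₁, hg'⟩ := (isCkBar_succ_iff hU).1 hg
    have hderiv : EqOn (fun x => B.precompR E (f x) (fderivWithin ℝ g U x)
        + B.precompL E (fderivWithin ℝ f U x) (g x))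
        (fderivWithin ℝ (fun x => B (f x) (g x)) U) U := fun x hx =>
      (B.fderivWithin_of_bilinear (hf₁ x hx) (hg₁ x hx) (hU x hx)).symm
    refine (isCkBar_succ_iff hU).2 ⟨hf₀.bilinear B hg₀,
      (B.differentiable.comp_differentiableOn hf₁).clm_apply hg₁, ?_⟩
    exact ((ih (B.precompR E) (hf.of_le k.le_succ) hg').add hU
      (ih (B.precompL E) hf' (hg.of_le k.le_succ))).congr hderiv

variable {m : ℕ} {H : E → ContinuousMultilinearMap ℝ (fun _ : Fin m => G) Z}
  {h : Fin m → E → G}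

theorem IsCkBar.continuousMultilinearMap_apply (hU : UniqueDiffOn ℝ U) (hH : IsCkBar k U H)
    (hh : ∀ i, IsCkBar k U (h i)) : IsCkBar k U (fun x => H x (fun i => h i x)) := by
  induction m with
  | zero =>
    let T := (continuousMultilinearCurryFin0 ℝ G Z).toLinearIsometry.toContinuousLinearMap
    exact (hH.clm_apply hU T).congr fun x _ => congrArg (H x) (Subsingleton.elim _ _)
  | succ m ih =>
    let B := (continuousMultilinearCurryLeftEquiv ℝ (fun _ : Fin (m + 1) => G) Z
      ).toLinearIsometry.toContinuousLinearMap
    exact (ih (hH.bilinear hU B (hh 0)) fun i => hh i.succ).congr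
      fun x _ => congrArg (H x) (Fin.cons_self_tail fun i => h i x)

theorem ckNorm_continuousMultilinearMap_apply_le (hUd : UniqueDiffOn ℝ U)
    (hUc : IsCompact (closure U)) (hH : IsCkBar k U H) (hh : ∀ i, IsCkBar k U (h i)) :
    ckNorm k U (fun x => H x (fun i => h i x)) ≤
      (2 ^ k) ^ m * ckNorm k U H * ∏ i, ckNorm k U (h i) := by
  induction m with
  | zero =>
    let T := (continuousMultilinearCurryFin0 ℝ G Z).toLinearIsometry.toContinuousLinearMap
    calc ckNorm k U (fun x => H x (fun i => h i x))
        = ckNorm k U (fun x => T (H x)) :=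
          congrArg (ckNorm k U) (funext fun x => congrArg (H x) (Subsingleton.elim _ _))
      _ ≤ ‖T‖ * ckNorm k U H := ckNorm_clm_apply_le hUd hUc T hH
      _ ≤ (2 ^ k) ^ 0 * ckNorm k U H * ∏ i, ckNorm k U (h i) := by
          simpa using mul_le_of_le_one_left ckNorm_nonneg
            (LinearIsometry.norm_toContinuousLinearMap_le _)
  | succ m ih =>
    let B := (continuousMultilinearCurryLeftEquiv ℝ (fun _ : Fin (m + 1) => G) Z
      ).toLinearIsometry.toContinuousLinearMap
    have hB : ckNorm k U (fun x => B (H x) (h 0 x)) ≤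
        2 ^ k * (ckNorm k U H * ckNorm k U (h 0)) := by
      refine (ckNorm_bilinear_le hUd hUc B hH (hh 0)).trans ?_
      rw [mul_assoc]
      exact mul_le_of_le_one_left
        (mul_nonneg (by positivity) (mul_nonneg ckNorm_nonneg ckNorm_nonneg))
        (LinearIsometry.norm_toContinuousLinearMap_le _)
    calc ckNorm k U (fun x => H x (fun i => h i x))
        = ckNorm k U (fun x => B (H x) (h 0 x) (fun i => h i.succ x)) :=
          congrArg (ckNorm k U) (funext fun x =>
            (congrArg (H x) (Fin.cons_self_tail fun i => h i x)).symm)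
      _ ≤ (2 ^ k) ^ m * ckNorm k U (fun x => B (H x) (h 0 x)) *
            ∏ i : Fin m, ckNorm k U (h i.succ) :=
          ih (hH.bilinear hUd B (hh 0)) fun i => hh i.succ
      _ ≤ (2 ^ k) ^ m * (2 ^ k * (ckNorm k U H * ckNorm k U (h 0))) *
            ∏ i : Fin m, ckNorm k U (h i.succ) :=
          mul_le_mul_of_nonneg_right (by gcongr) (Finset.prod_nonneg fun _ _ => ckNorm_nonneg)
      _ = (2 ^ k) ^ (m + 1) * ckNorm k U H * ∏ i, ckNorm k U (h i) := by
          rw [Fin.prod_univ_succ]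
          ring

end Evaluation

theorem stmt_8_general (n d m k : ℕ) (Y : Type*) [NormedAddCommGroup Y] [NormedSpace ℝ Y]
    (U : Set (EuclideanSpace ℝ (Fin n))) (hUo : IsOpen U) (hUb : Bornology.IsBounded U) :
    (∀ (H₁ H₂ : EuclideanSpace ℝ (Fin n) →
        ContinuousMultilinearMap ℝ (fun _ : Fin m => EuclideanSpace ℝ (Fin d)) Y)
      (h : Fin m → (EuclideanSpace ℝ (Fin n) → EuclideanSpace ℝ (Fin d))),
      (fun x => (H₁ x + H₂ x) (fun i => h i x)) =
        (fun x => H₁ x (fun i => h i x)) + fun x => H₂ x (fun i => h i x)) ∧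
    ∃ C > (0 : ℝ),
      ∀ H : EuclideanSpace ℝ (Fin n) →
          ContinuousMultilinearMap ℝ (fun _ : Fin m => EuclideanSpace ℝ (Fin d)) Y,
        IsCkBar k U H →
        (∀ (x : EuclideanSpace ℝ (Fin n)) (v : Fin m → EuclideanSpace ℝ (Fin d))
          (σ : Equiv.Perm (Fin m)), H x (v ∘ σ) = H x v) →
        ∀ h : Fin m → (EuclideanSpace ℝ (Fin n) → EuclideanSpace ℝ (Fin d)),
          (∀ i, IsCkBar k U (h i)) →
          IsCkBar k U (fun x => H x (fun i => h i x)) ∧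
          ckNorm k U (fun x => H x (fun i => h i x)) ≤
            C * ckNorm k U H * ∏ i : Fin m, ckNorm k U (h i) := by
  refine ⟨fun H₁ H₂ h => rfl, (2 ^ k) ^ m, by positivity, fun H hH _ h hh => ?_⟩
  exact ⟨hH.continuousMultilinearMap_apply hUo.uniqueDiffOn hh,
    ckNorm_continuousMultilinearMap_apply_le hUo.uniqueDiffOn hUb.isCompact_closure hH hh⟩

/-- the evaluation map
`A : C^k(closure U, L^m_s(ℝ^d, Y)) → L^m_s(C^k(closure U, ℝ^d), C^k(closure U, Y))`,
`(A(H)(h₁,…,h_m))(x) = H(x)(h₁(x),…,h_m(x))`, is well defined (maps `C^k` data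
to `C^k` data), is linear in `H`, and is continuous, i.e. bounded:
`‖A(H)(h₁,…,h_m)‖_{C^k} ≤ C ‖H‖_{C^k} ∏ ‖h_i‖_{C^k}`. -/
theorem stmt_8 (n d m k : ℕ) (Y : Type*) [NormedAddCommGroup Y] [NormedSpace ℝ Y]
    [CompleteSpace Y]
    (U : Set (EuclideanSpace ℝ (Fin n))) (hUo : IsOpen U) (hUb : Bornology.IsBounded U) :
    (∀ (H₁ H₂ : EuclideanSpace ℝ (Fin n) →
        ContinuousMultilinearMap ℝ (fun _ : Fin m => EuclideanSpace ℝ (Fin d)) Y)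
      (h : Fin m → (EuclideanSpace ℝ (Fin n) → EuclideanSpace ℝ (Fin d))),
      (fun x => (H₁ x + H₂ x) (fun i => h i x)) =
        (fun x => H₁ x (fun i => h i x)) + fun x => H₂ x (fun i => h i x)) ∧
    ∃ C > (0 : ℝ),
      ∀ H : EuclideanSpace ℝ (Fin n) →
          ContinuousMultilinearMap ℝ (fun _ : Fin m => EuclideanSpace ℝ (Fin d)) Y,
        IsCkBar k U H →
        (∀ (x : EuclideanSpace ℝ (Fin n)) (v : Fin m → EuclideanSpace ℝ (Fin d))
          (σ : Equiv.Perm (Fin m)), H x (v ∘ σ) = H x v) →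
        ∀ h : Fin m → (EuclideanSpace ℝ (Fin n) → EuclideanSpace ℝ (Fin d)),
          (∀ i, IsCkBar k U (h i)) →
          IsCkBar k U (fun x => H x (fun i => h i x)) ∧
          ckNorm k U (fun x => H x (fun i => h i x)) ≤
            C * ckNorm k U H * ∏ i : Fin m, ckNorm k U (h i) :=
  stmt_8_general n d m k Y U hUo hUb
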